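/- arXiv:math/0311099 — 6 statements merged into one kernel-verified Lean document; each statement's English description precedes it below -/
import Mathlib

section
/- Let F be a field, A a commutative group (written additively), and s an A-valued symbol on F. Then s(x, y) + s(y, x) = 0 for all x, y ∈ Fˣ. -/
/-- An `A`-valued symbol on the field `F`: a `ℤ`-bilinear map on `Fˣ × Fˣ`
vanishing on pairs `(x, y)` with `x + y = 1`. -/
def IsAddSymbol {F A : Type*} [Field F] [AddCommGroup A] (s : Fˣ → Fˣ → A) : Prop :=
  (∀ x x' y : Fˣ, s (x * x') y = s x y + s x' y) ∧
  (∀ x y y' : Fˣ, s x (y * y') = s x y + s x y') ∧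
  (∀ x y : Fˣ, (x : F) + (y : F) = 1 → s x y = 0)

/-!
Expanding `s(xy, -xy) = 0` by bilinearity leaves `s(x, y) + s(y, x)`, so everything reduces
to `s(x, -x) = 0`. For `x ≠ 1` this follows from the Steinberg relation applied twice, through
the identity `1 - x = (-x)(1 - x⁻¹)`: both `s(x, 1 - x)` and `s(x, 1 - x⁻¹) = -s(x⁻¹, 1 - x⁻¹)`
vanish.
-/

namespace IsAddSymbol

variable {F A : Type*} [Field F] [AddCommGroup A] {s : Fˣ → Fˣ → A}

theorem map_mul_left (hs : IsAddSymbol s) (x x' y : Fˣ) : s (x * x') y = s x y + s x' y :=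
  hs.1 x x' y

theorem map_mul_right (hs : IsAddSymbol s) (x y y' : Fˣ) : s x (y * y') = s x y + s x y' :=
  hs.2.1 x y y'

theorem apply_eq_zero_of_add_eq_one (hs : IsAddSymbol s) {x y : Fˣ}
    (h : (x : F) + (y : F) = 1) : s x y = 0 :=
  hs.2.2 x y h

theorem map_one_left (hs : IsAddSymbol s) (y : Fˣ) : s 1 y = 0 := by
  simpa using hs.map_mul_left 1 1 y

theorem map_inv_left (hs : IsAddSymbol s) (x y : Fˣ) : s x⁻¹ y = -s x y :=
  eq_neg_of_add_eq_zero_right <| by rw [← hs.map_mul_left, mul_inv_cancel, hs.map_one_left]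

theorem apply_neg_self (hs : IsAddSymbol s) (x : Fˣ) : s x (-x) = 0 := by
  by_cases hx : x = 1
  · rw [hx, hs.map_one_left]
  have hx' : (x : F) ≠ 1 := fun h => hx (Units.val_eq_one.1 h)
  let u : Fˣ := Units.mk0 (1 - x) (sub_ne_zero.2 hx'.symm)
  let v : Fˣ := Units.mk0 (1 - (x : F)⁻¹) (sub_ne_zero.2 (inv_ne_one.2 hx').symm)
  have hu : s x u = 0 := hs.apply_eq_zero_of_add_eq_one (add_sub_cancel _ _)
  have hv : s x v = 0 := by
    rw [← neg_eq_zero, ← hs.map_inv_left]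
    exact hs.apply_eq_zero_of_add_eq_one (by simp [v])
  have huv : u = -x * v := Units.ext <| by
    simp only [u, v, Units.val_mk0, Units.val_neg, Units.val_mul]
    field_simp
    ring
  rwa [huv, hs.map_mul_right, hv, add_zero] at hu

end IsAddSymbol

/-- For any symbol `s`, one has `s(x, y) + s(y, x) = 0`. -/
theorem symbol_skew {F A : Type*} [Field F] [AddCommGroup A]
    (s : Fˣ → Fˣ → A) (hs : IsAddSymbol s) (x y : Fˣ) : s x y + s y x = 0 := by
  have h := hs.apply_neg_self (x * y)
  rwa [hs.map_mul_left, ← neg_mul, hs.map_mul_right, neg_mul_comm, hs.map_mul_right,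
    hs.apply_neg_self, hs.apply_neg_self, zero_add, add_zero] at h
end

section
/- Let p be an odd prime and let v : ℚ_pˣ → ℤ denote the p-adic valuation. For all x, y ∈ ℚ_pˣ, the element t(x, y) = (-1)^{v(x)v(y)} · x^{v(y)} · y^{-v(x)} has valuation 0, hence lies in ℤ_pˣ; and the map s_p : ℚ_pˣ × ℚ_pˣ → (ℤ/pℤ)ˣ sending (x, y) to the residue of t(x, y) modulo p is a symbol on ℚ_p with values in the multiplicative group (ℤ/pℤ)ˣ: it is multiplicative in each variable and s_p(x, y) = 1 whenever x + y = 1. -/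
/-- An `A`-valued (multiplicative) symbol on the field `F`: a map on `Fˣ × Fˣ`,
multiplicative in each variable, equal to `1` on pairs `(x, y)` with `x + y = 1`. -/
def IsMulSymbol {F A : Type*} [Field F] [CommGroup A] (s : Fˣ → Fˣ → A) : Prop :=
  (∀ x x' y : Fˣ, s (x * x') y = s x y * s x' y) ∧
  (∀ x y y' : Fˣ, s x (y * y') = s x y * s x y') ∧
  (∀ x y : Fˣ, (x : F) + (y : F) = 1 → s x y = 1)

/-- The element `(-1)^(v(x)v(y)) · x^(v(y)) · y^(-v(x))` of `ℚ_pˣ`, where `v` is the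
p-adic valuation. -/
noncomputable def padicTame (p : ℕ) [Fact p.Prime] (x y : ℚ_[p]ˣ) : ℚ_[p]ˣ :=
  (-1) ^ ((x : ℚ_[p]).valuation * (y : ℚ_[p]).valuation) *
    x ^ (y : ℚ_[p]).valuation * y ^ (-(x : ℚ_[p]).valuation)

/-!
Since `v` is a homomorphism on `ℚ_pˣ` and the sign exponent `v(x)v(y)` is bilinear, `t` is
bimultiplicative, and `v(t(x, y)) = v(x)v(y) - v(x)v(y) = 0`. For the Steinberg relation
`x + y = 1`, the ultrametric inequality leaves three cases, in each of which `t(x, y)` is a power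
of a principal unit `u` (`‖u - 1‖ < 1`), whose residue is `1`: if `‖x‖ < 1` then `v(y) = 0` and
`t = y^(-v(x))`; if `‖x‖ = 1` then `v(x) = 0` and `t = x^(v(y))`, with `x` principal unless
`v(y) = 0`; if `‖x‖ > 1` then `v(x) = v(y)` and `t = (-x/y)^(v(x))`, where `-x/y = 1 - 1/y`.
-/

open PadicInt

theorem PadicInt.toZMod_eq_one_of_norm_sub_one_lt {p : ℕ} [Fact p.Prime] {z : ℤ_[p]}
    (hz : ‖z - 1‖ < 1) : toZMod z = 1 := by
  rwa [← sub_eq_zero, ← map_one toZMod, ← map_sub, ← RingHom.mem_ker, ker_toZMod,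
    IsLocalRing.mem_maximalIdeal, mem_nonunits]

namespace Padic

variable {p : ℕ} [Fact p.Prime]

theorem valuation_eq_of_norm_eq {x y : ℚ_[p]} (hx : x ≠ 0) (hy : y ≠ 0) (h : ‖x‖ = ‖y‖) :
    x.valuation = y.valuation := by
  have hp : (1 : ℝ) < p := mod_cast (Fact.out : p.Prime).one_lt
  rw [norm_eq_zpow_neg_valuation hx, norm_eq_zpow_neg_valuation hy] at h
  exact neg_injective (zpow_right_injective₀ (by positivity) hp.ne' h)

theorem valuation_eq_zero_of_norm_eq_one {x : ℚ_[p]} (h : ‖x‖ = 1) : x.valuation = 0 := by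
  have hx : x ≠ 0 := by rintro rfl; simp at h
  simpa using valuation_eq_of_norm_eq hx one_ne_zero (by rw [h, norm_one])

theorem valuation_units_mul (x y : ℚ_[p]ˣ) :
    ((x * y : ℚ_[p]ˣ) : ℚ_[p]).valuation = (x : ℚ_[p]).valuation + (y : ℚ_[p]).valuation := by
  rw [Units.val_mul, valuation_mul x.ne_zero y.ne_zero]

theorem valuation_units_zpow (x : ℚ_[p]ˣ) (n : ℤ) :
    ((x ^ n : ℚ_[p]ˣ) : ℚ_[p]).valuation = n * (x : ℚ_[p]).valuation := by
  rw [Units.val_zpow_eq_zpow_val, valuation_zpow]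

theorem valuation_units_neg_one : (((-1 : ℚ_[p]ˣ) : ℚ_[p])).valuation = 0 :=
  valuation_eq_zero_of_norm_eq_one (by simp)

variable (p) in
/-- The units `u` with `‖u - 1‖ < 1`, presented as the image of the kernel of the reduction
`ℤ_[p]ˣ → (ZMod p)ˣ` so that the subgroup axioms come for free. -/
noncomputable def principalUnits : Subgroup ℚ_[p]ˣ :=
  (Units.map (toZMod (p := p) : ℤ_[p] →* ZMod p)).ker.map
    (Units.map (Coe.ringHom (p := p) : ℤ_[p] →* ℚ_[p]))

theorem norm_eq_one_of_mem_principalUnits {z : ℚ_[p]ˣ} (hz : z ∈ principalUnits p) :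
    ‖(z : ℚ_[p])‖ = 1 := by
  rw [principalUnits, Subgroup.mem_map] at hz
  obtain ⟨u, -, rfl⟩ := hz
  exact norm_units u

theorem mem_principalUnits_of_norm_sub_one_lt {z : ℚ_[p]ˣ} (hz : ‖(z : ℚ_[p]) - 1‖ < 1) :
    z ∈ principalUnits p := by
  have hz1 : ‖(z : ℚ_[p])‖ = 1 := by
    simpa using norm_eq_of_norm_sub_lt_right (z2 := 1) (by simpa using hz)
  rw [principalUnits, Subgroup.mem_map]
  exact ⟨mkUnits hz1, Units.ext (toZMod_eq_one_of_norm_sub_one_lt hz), Units.ext rfl⟩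

theorem mem_principalUnits_of_add_eq_one {x y : ℚ_[p]ˣ} (hxy : (x : ℚ_[p]) + y = 1)
    (hx : ‖(x : ℚ_[p])‖ < 1) : y ∈ principalUnits p :=
  mem_principalUnits_of_norm_sub_one_lt (by rwa [← hxy, sub_add_cancel_right, norm_neg])

theorem neg_mul_inv_mem_principalUnits {x y : ℚ_[p]ˣ} (hxy : (x : ℚ_[p]) + y = 1)
    (hy : 1 < ‖(y : ℚ_[p])‖) : -(x * y⁻¹) ∈ principalUnits p := by
  have hsub : ((-(x * y⁻¹) : ℚ_[p]ˣ) : ℚ_[p]) - 1 = -(y : ℚ_[p])⁻¹ := by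
    rw [Units.val_neg, Units.val_mul, Units.val_inv_eq_inv_val]
    field_simp [y.ne_zero]
    linear_combination -hxy
  apply mem_principalUnits_of_norm_sub_one_lt
  rw [hsub, norm_neg, norm_inv]
  exact inv_lt_one_of_one_lt₀ hy

theorem map_toZMod_mkUnits_of_mem_principalUnits {z : ℚ_[p]ˣ} (hz : z ∈ principalUnits p)
    (h : ‖(z : ℚ_[p])‖ = 1) : Units.map (toZMod (p := p) : ℤ_[p] →* ZMod p) (mkUnits h) = 1 := by
  rw [principalUnits, Subgroup.mem_map] at hz
  obtain ⟨u, hu, rfl⟩ := hz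
  rwa [show mkUnits h = u from Units.ext rfl]

end Padic

open Padic

section PadicTame

variable {p : ℕ} [Fact p.Prime]

theorem padicTame_valuation (x y : ℚ_[p]ˣ) :
    ((padicTame p x y : ℚ_[p]ˣ) : ℚ_[p]).valuation = 0 := by
  simp only [padicTame, valuation_units_mul, valuation_units_zpow, valuation_units_neg_one]
  ring

theorem padicTame_norm (x y : ℚ_[p]ˣ) : ‖((padicTame p x y : ℚ_[p]ˣ) : ℚ_[p])‖ = 1 := by
  rw [norm_eq_zpow_neg_valuation (padicTame p x y).ne_zero, padicTame_valuation, neg_zero,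
    zpow_zero]

theorem padicTame_mul_left (x x' y : ℚ_[p]ˣ) :
    padicTame p (x * x') y = padicTame p x y * padicTame p x' y := by
  simp only [padicTame, valuation_units_mul, add_mul, neg_add, zpow_add, mul_zpow]
  simp only [mul_assoc, mul_comm, mul_left_comm]

theorem padicTame_mul_right (x y y' : ℚ_[p]ˣ) :
    padicTame p x (y * y') = padicTame p x y * padicTame p x y' := by
  simp only [padicTame, valuation_units_mul, mul_add, zpow_add, mul_zpow]
  simp only [mul_assoc, mul_comm, mul_left_comm]

theorem padicTame_of_valuation_left_eq_zero {x y : ℚ_[p]ˣ}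
    (hx : (x : ℚ_[p]).valuation = 0) : padicTame p x y = x ^ (y : ℚ_[p]).valuation := by
  simp [padicTame, hx]

theorem padicTame_of_valuation_right_eq_zero {x y : ℚ_[p]ˣ}
    (hy : (y : ℚ_[p]).valuation = 0) : padicTame p x y = y ^ (-(x : ℚ_[p]).valuation) := by
  simp [padicTame, hy]

theorem padicTame_of_valuation_eq {x y : ℚ_[p]ˣ}
    (h : (x : ℚ_[p]).valuation = (y : ℚ_[p]).valuation) :
    padicTame p x y = (-(x * y⁻¹)) ^ (x : ℚ_[p]).valuation := by
  rw [padicTame, ← h]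
  set a := (x : ℚ_[p]).valuation
  have hsign : (-1 : ℚ_[p]ˣ) ^ (a * a) = (-1) ^ a := by
    rcases Int.even_or_odd a with ha | ha
    · rw [ha.neg_one_zpow, (ha.mul_right a).neg_one_zpow]
    · rw [ha.neg_one_zpow, (ha.mul ha).neg_one_zpow]
  rw [hsign, ← neg_one_mul (x * y⁻¹), mul_zpow, mul_zpow, inv_zpow', mul_assoc]

theorem padicTame_mem_principalUnits_of_add_eq_one {x y : ℚ_[p]ˣ}
    (hxy : (x : ℚ_[p]) + y = 1) : padicTame p x y ∈ principalUnits p := by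
  rcases lt_trichotomy ‖(x : ℚ_[p])‖ 1 with hx | hx | hx
  · have hy := mem_principalUnits_of_add_eq_one hxy hx
    rw [padicTame_of_valuation_right_eq_zero
      (valuation_eq_zero_of_norm_eq_one (norm_eq_one_of_mem_principalUnits hy))]
    exact zpow_mem hy _
  · rw [padicTame_of_valuation_left_eq_zero (valuation_eq_zero_of_norm_eq_one hx)]
    have hy : ‖(y : ℚ_[p])‖ ≤ 1 := by
      calc ‖(y : ℚ_[p])‖ = ‖1 + -(x : ℚ_[p])‖ := by rw [← hxy, add_neg_cancel_comm]
        _ ≤ max ‖(1 : ℚ_[p])‖ ‖-(x : ℚ_[p])‖ := nonarchimedean _ _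
        _ = 1 := by rw [norm_neg, hx, norm_one, max_self]
    rcases hy.lt_or_eq with hy | hy
    · exact zpow_mem (mem_principalUnits_of_add_eq_one (by rwa [add_comm]) hy) _
    · rw [valuation_eq_zero_of_norm_eq_one hy, zpow_zero]
      exact one_mem _
  · have hxy' : ‖(x : ℚ_[p])‖ = ‖(y : ℚ_[p])‖ :=
      norm_eq_of_norm_add_lt_left (by rwa [hxy, norm_one])
    rw [padicTame_of_valuation_eq (valuation_eq_of_norm_eq x.ne_zero y.ne_zero hxy')]
    exact zpow_mem (neg_mul_inv_mem_principalUnits hxy (hxy' ▸ hx)) _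

end PadicTame

noncomputable def padicTameSymbol (p : ℕ) [Fact p.Prime] (x y : ℚ_[p]ˣ) : (ZMod p)ˣ :=
  Units.map (toZMod (p := p) : ℤ_[p] →* ZMod p) (mkUnits (padicTame_norm x y))

theorem isMulSymbol_padicTameSymbol (p : ℕ) [Fact p.Prime] : IsMulSymbol (padicTameSymbol p) := by
  refine ⟨fun x x' y => ?_, fun x y y' => ?_, fun x y hxy => ?_⟩
  · simp only [padicTameSymbol, ← map_mul]
    congr 1
    exact Units.ext (Subtype.ext (congrArg Units.val (padicTame_mul_left x x' y)))
  · simp only [padicTameSymbol, ← map_mul]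
    congr 1
    exact Units.ext (Subtype.ext (congrArg Units.val (padicTame_mul_right x y y')))
  · exact map_toZMod_mkUnits_of_mem_principalUnits
      (padicTame_mem_principalUnits_of_add_eq_one hxy) _

theorem padic_tame_symbol_general (p : ℕ) [Fact p.Prime] :
    (∀ x y : ℚ_[p]ˣ,
      ((padicTame p x y : ℚ_[p]ˣ) : ℚ_[p]).valuation = 0 ∧
      ‖((padicTame p x y : ℚ_[p]ˣ) : ℚ_[p])‖ = 1) ∧
    ∃ s : ℚ_[p]ˣ → ℚ_[p]ˣ → (ZMod p)ˣ,
      (∀ (x y : ℚ_[p]ˣ) (h : ‖((padicTame p x y : ℚ_[p]ˣ) : ℚ_[p])‖ ≤ 1),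
        (s x y : ZMod p) =
          PadicInt.toZMod (⟨((padicTame p x y : ℚ_[p]ˣ) : ℚ_[p]), h⟩ : ℤ_[p])) ∧
      IsMulSymbol s :=
  ⟨fun x y => ⟨padicTame_valuation x y, padicTame_norm x y⟩,
    padicTameSymbol p, fun _ _ _ => rfl, isMulSymbol_padicTameSymbol p⟩

/-- For an odd prime `p`, the element `t(x,y) = (-1)^(v(x)v(y)) x^(v(y)) y^(-v(x))` has
valuation `0` (hence lies in `ℤ_pˣ`), and its residue modulo `p` defines a symbol
`s_p` on `ℚ_p` with values in `(ℤ/pℤ)ˣ`. -/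
theorem padic_tame_symbol (p : ℕ) [Fact p.Prime] (hp : p ≠ 2) :
    (∀ x y : ℚ_[p]ˣ,
      ((padicTame p x y : ℚ_[p]ˣ) : ℚ_[p]).valuation = 0 ∧
      ‖((padicTame p x y : ℚ_[p]ˣ) : ℚ_[p])‖ = 1) ∧
    ∃ s : ℚ_[p]ˣ → ℚ_[p]ˣ → (ZMod p)ˣ,
      (∀ (x y : ℚ_[p]ˣ) (h : ‖((padicTame p x y : ℚ_[p]ˣ) : ℚ_[p])‖ ≤ 1),
        (s x y : ZMod p) =
          PadicInt.toZMod (⟨((padicTame p x y : ℚ_[p]ˣ) : ℚ_[p]), h⟩ : ℤ_[p])) ∧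
      IsMulSymbol s :=
  padic_tame_symbol_general p
end

section
/- Let p be an odd prime, v : ℚ_pˣ → ℤ the p-adic valuation, and for x, y ∈ ℚ_pˣ let s_p(x, y) ∈ (ℤ/pℤ)ˣ be the residue modulo p of (-1)^{v(x)v(y)} · x^{v(y)} · y^{-v(x)}. Then the equation x·R² + y·S² = 1 has a solution (R, S) ∈ ℚ_p × ℚ_p if and only if s_p(x, y)^{(p-1)/2} = 1, i.e. if and only if s_p(x, y) is a square in (ℤ/pℤ)ˣ. -/
/-- The residue mod `p` of a unit of `ℚ_p` of norm at most one (and `0` otherwise,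
by convention). -/
noncomputable def padicRes (p : ℕ) [Fact p.Prime] (u : ℚ_[p]ˣ) : ZMod p :=
  if h : ‖(u : ℚ_[p])‖ ≤ 1 then PadicInt.toZMod (⟨(u : ℚ_[p]), h⟩ : ℤ_[p]) else 0

theorem zpow_eq_sq_mul_zpow_emod_two {G₀ : Type*} [GroupWithZero G₀] {g : G₀} (hg : g ≠ 0)
    (n : ℤ) : g ^ n = (g ^ (n / 2)) ^ 2 * g ^ (n % 2) := by
  rw [← zpow_natCast, ← zpow_mul, ← zpow_add₀ hg, Nat.cast_ofNat, mul_comm, Int.mul_ediv_add_emod]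

theorem isSquare_sq_mul_iff {G₀ : Type*} [CommGroupWithZero G₀] {c : G₀} (hc : c ≠ 0) (g : G₀) :
    IsSquare (c ^ 2 * g) ↔ IsSquare g := by
  refine ⟨fun h ↦ ?_, (IsSquare.sq c).mul⟩
  simpa [hc] using (IsSquare.sq c⁻¹).mul h

theorem isSquare_mul_zpow_iff_emod_two {G₀ : Type*} [CommGroupWithZero G₀] {g : G₀} (hg : g ≠ 0)
    (h : G₀) (n : ℤ) : IsSquare (h * g ^ n) ↔ IsSquare (h * g ^ (n % 2)) := by
  rw [zpow_eq_sq_mul_zpow_emod_two hg, mul_left_comm, isSquare_sq_mul_iff (zpow_ne_zero _ hg)]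

/-- `residueSymbol a b ū w̄` is the residue of the tame symbol of `p^a u` and `p^b w`
(`padicRes_padicTame`). -/
def residueSymbol {K : Type*} [Field K] (a b : ℤ) (r s : K) : K :=
  (-1) ^ (a * b) * r ^ b * s ^ (-a)

theorem residueSymbol_ne_zero {K : Type*} [Field K] (a b : ℤ) {r s : K} (hr : r ≠ 0)
    (hs : s ≠ 0) : residueSymbol a b r s ≠ 0 :=
  mul_ne_zero (mul_ne_zero (zpow_ne_zero _ (neg_ne_zero.mpr one_ne_zero)) (zpow_ne_zero _ hr))
    (zpow_ne_zero _ hs)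

theorem isSquare_residueSymbol_iff_emod_two {K : Type*} [Field K] {r s : K} (hr : r ≠ 0)
    (hs : s ≠ 0) (a b : ℤ) :
    IsSquare (residueSymbol a b r s) ↔ IsSquare (residueSymbol (a % 2) (b % 2) r s) := by
  have h1 : (-1 : K) ≠ 0 := neg_ne_zero.mpr one_ne_zero
  simp only [residueSymbol, zpow_neg, ← inv_zpow]
  calc IsSquare ((-1) ^ (a * b) * r ^ b * s⁻¹ ^ a)
      ↔ IsSquare ((-1) ^ (a * b) * r ^ b * s⁻¹ ^ (a % 2)) :=
        isSquare_mul_zpow_iff_emod_two (inv_ne_zero hs) _ _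
    _ ↔ IsSquare ((-1) ^ (a * b) * s⁻¹ ^ (a % 2) * r ^ b) := by rw [mul_right_comm]
    _ ↔ IsSquare ((-1) ^ (a * b) * s⁻¹ ^ (a % 2) * r ^ (b % 2)) :=
        isSquare_mul_zpow_iff_emod_two hr _ _
    _ ↔ IsSquare (r ^ (b % 2) * s⁻¹ ^ (a % 2) * (-1) ^ (a * b)) := by ring_nf
    _ ↔ IsSquare (r ^ (b % 2) * s⁻¹ ^ (a % 2) * (-1) ^ (a % 2 * (b % 2))) := by
        rw [isSquare_mul_zpow_iff_emod_two h1, Int.mul_emod, ← isSquare_mul_zpow_iff_emod_two h1]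
    _ ↔ IsSquare ((-1) ^ (a % 2 * (b % 2)) * r ^ (b % 2) * s⁻¹ ^ (a % 2)) := by ring_nf

def ConicSolvable {R : Type*} [Semiring R] (x y : R) : Prop :=
  ∃ r s : R, x * r ^ 2 + y * s ^ 2 = 1

namespace ConicSolvable

variable {R S K : Type*}

theorem symm [CommSemiring R] {x y : R} : ConicSolvable x y → ConicSolvable y x
  | ⟨r, s, h⟩ => ⟨s, r, by rw [add_comm, h]⟩

theorem comm [CommSemiring R] {x y : R} : ConicSolvable x y ↔ ConicSolvable y x :=
  ⟨symm, symm⟩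

theorem map [Semiring R] [Semiring S] (f : R →+* S) {x y : R} :
    ConicSolvable x y → ConicSolvable (f x) (f y)
  | ⟨r, s, h⟩ => ⟨f r, f s, by simpa using congrArg f h⟩

theorem of_isSquare_left [Field K] {x : K} (y : K) (hx : x ≠ 0) (h : IsSquare x) :
    ConicSolvable x y := by
  obtain ⟨c, rfl⟩ := h
  exact ⟨c⁻¹, 0, by field_simp [left_ne_zero_of_mul hx]; ring⟩

theorem of_isSquare_neg_div [Field K] (h2 : (2 : K) ≠ 0) {x y : K} (hx : x ≠ 0) (hy : y ≠ 0)
    (h : IsSquare (-x / y)) : ConicSolvable x y := by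
  obtain ⟨c, hc⟩ := h
  have hx' : x = -(y * c ^ 2) := by field_simp at hc; linear_combination -hc
  have hc0 : c ≠ 0 := by rintro rfl; simp [hx] at hx'
  -- the conic is `y (s - c r) (s + c r) = 1`: take `s - c r = 1` and `s + c r = 1 / y`
  exact ⟨(y⁻¹ - 1) / (2 * c), (y⁻¹ + 1) / 2, by rw [hx']; field_simp; ring⟩

end ConicSolvable

theorem conicSolvable_sq_mul_left_iff {K : Type*} [Field K] {c : K} (hc : c ≠ 0) (x y : K) :
    ConicSolvable (c ^ 2 * x) y ↔ ConicSolvable x y := by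
  refine ⟨fun ⟨r, s, h⟩ ↦ ⟨c * r, s, by rw [← h]; ring⟩, fun ⟨r, s, h⟩ ↦ ⟨r / c, s, ?_⟩⟩
  rw [← h]; field_simp

theorem conicSolvable_zpow_mul_left_iff_emod_two {K : Type*} [Field K] {c : K} (hc : c ≠ 0)
    (n : ℤ) (x y : K) : ConicSolvable (c ^ n * x) y ↔ ConicSolvable (c ^ (n % 2) * x) y := by
  rw [zpow_eq_sq_mul_zpow_emod_two hc, mul_assoc, conicSolvable_sq_mul_left_iff (zpow_ne_zero _ hc)]

open Polynomial in
theorem FiniteField.exists_mul_sq_add_mul_sq_eq_one {F : Type*} [Field F] [Fintype F]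
    (hF : ringChar F ≠ 2) {a b : F} (ha : a ≠ 0) (hb : b ≠ 0) :
    ∃ r s : F, a * r ^ 2 + b * s ^ 2 = 1 := by
  obtain ⟨r, s, h⟩ := exists_root_sum_quadratic (f := C a * X ^ 2) (g := C b * X ^ 2 - 1)
    (degree_C_mul_X_pow 2 ha)
    (by rw [degree_sub_eq_left_of_degree_lt] <;> simp [degree_C_mul_X_pow 2 hb])
    (odd_card_of_char_ne_two hF)
  exact ⟨r, s, by simpa [sub_eq_zero, ← add_sub_assoc] using h⟩

open Polynomial in
theorem HenselianRing.isSquare_of_isSquare_map {R K : Type*} [CommRing R] [Field K]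
    {I : Ideal R} [HenselianRing R I] (φ : R →+* K) (hφ : Function.Surjective φ)
    (hker : RingHom.ker φ = I) (h2 : (2 : K) ≠ 0) {z : R} (hz : φ z ≠ 0)
    (h : IsSquare (φ z)) : IsSquare z := by
  subst hker
  obtain ⟨c₀, hc₀⟩ := h
  obtain ⟨c, rfl⟩ := hφ c₀
  have hc : φ c ≠ 0 := fun h0 ↦ hz (by rw [hc₀, h0, mul_zero])
  obtain ⟨a, ha, -⟩ := HenselianRing.is_henselian (I := RingHom.ker φ) (X ^ 2 - C z)
    (monic_X_pow_sub_C z two_ne_zero) c (by simp [RingHom.mem_ker, hc₀, sq])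
    (by
      rw [← isUnit_map_iff (φ.quotientKerEquivOfSurjective hφ),
        RingHom.quotientKerEquivOfSurjective_apply_mk, isUnit_iff_ne_zero]
      simpa [one_add_one_eq_two, map_ofNat] using mul_ne_zero h2 hc)
  exact ⟨a, by simpa [sub_eq_zero, sq, eq_comm] using ha⟩

theorem IsUltrametricDist.norm_add_eq_one_cases {E : Type*} [SeminormedAddCommGroup E]
    [IsUltrametricDist E] {a b : E} (h : ‖a + b‖ = 1) (hb : ‖b‖ ≠ 1) :
    (‖a‖ = 1 ∧ ‖b‖ < 1) ∨ (‖a‖ = ‖b‖ ∧ 1 < ‖b‖) := by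
  have hle := h ▸ norm_add_le_max a b
  rcases eq_or_ne ‖a‖ ‖b‖ with hab | hab
  · exact .inr ⟨hab, lt_of_le_of_ne (by simpa [hab] using hle) hb.symm⟩
  · have hmax := h ▸ norm_add_eq_max_of_norm_ne_norm hab
    have hb1 : ‖b‖ < 1 := lt_of_le_of_ne (hmax ▸ le_max_right _ _) hb
    refine .inl ⟨?_, hb1⟩
    rcases max_choice ‖a‖ ‖b‖ with hm | hm <;> rw [hm] at hmax
    exacts [hmax.symm, absurd hmax.symm hb]

theorem map_units_zpow {R K F : Type*} [Monoid R] [DivisionMonoid K] [FunLike F R K]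
    [MonoidHomClass F R K] (f : F) (u : Rˣ) (n : ℤ) : f ↑(u ^ n) = f ↑u ^ n := by
  change ((Units.map (f : R →* K) (u ^ n) : Kˣ) : K) = _
  rw [map_zpow, Units.val_zpow_eq_zpow_val]
  rfl

namespace PadicInt

variable {p : ℕ} [Fact p.Prime]

theorem toZMod_eq_zero_iff {z : ℤ_[p]} : toZMod z = 0 ↔ ‖z‖ < 1 := by
  rw [← RingHom.mem_ker, ker_toZMod, IsLocalRing.mem_maximalIdeal, mem_nonunits]

theorem toZMod_units_ne_zero (u : ℤ_[p]ˣ) : toZMod (u : ℤ_[p]) ≠ 0 :=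
  (u.isUnit.map toZMod).ne_zero

theorem isSquare_of_isSquare_toZMod (hp : p ≠ 2) {z : ℤ_[p]} (hz : toZMod z ≠ 0)
    (h : IsSquare (toZMod z)) : IsSquare z :=
  HenselianRing.isSquare_of_isSquare_map toZMod (ZMod.ringHom_surjective _) ker_toZMod
    (Ring.two_ne_zero (by rwa [ZMod.ringChar_zmod_n])) hz h

theorem coe_units_zpow (u : ℤ_[p]ˣ) (n : ℤ) :
    ((↑(u ^ n) : ℤ_[p]) : ℚ_[p]) = ((u : ℤ_[p]) : ℚ_[p]) ^ n :=
  map_units_zpow Coe.ringHom u n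

end PadicInt

namespace Padic

open PadicInt

variable {p : ℕ} [Fact p.Prime]

theorem norm_units (u : ℤ_[p]ˣ) : ‖((u : ℤ_[p]) : ℚ_[p])‖ = 1 :=
  PadicInt.norm_units u

theorem valuation_units (u : ℤ_[p]ˣ) : ((u : ℤ_[p]) : ℚ_[p]).valuation = 0 := by
  have h := valuation_mul (p := p) (x := (u : ℤ_[p])) (y := (u⁻¹ : ℤ_[p]ˣ)) (by simp) (by simp)
  rw [← PadicInt.coe_mul, Units.mul_inv, PadicInt.coe_one, valuation_one] at h
  have := PadicInt.valuation_coe_nonneg (x := (u : ℤ_[p]))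
  have := PadicInt.valuation_coe_nonneg (x := ((u⁻¹ : ℤ_[p]ˣ) : ℤ_[p]))
  omega

theorem valuation_zpow_mul_unit (a : ℤ) (u : ℤ_[p]ˣ) :
    ((p : ℚ_[p]) ^ a * (u : ℤ_[p])).valuation = a := by
  have hp : (p : ℚ_[p]) ≠ 0 := NeZero.ne _
  rw [valuation_mul (zpow_ne_zero _ hp) (by simp), valuation_zpow, valuation_p, valuation_units]
  simp

theorem exists_eq_zpow_mul_unit {x : ℚ_[p]} (hx : x ≠ 0) :
    ∃ u : ℤ_[p]ˣ, x = (p : ℚ_[p]) ^ x.valuation * (u : ℤ_[p]) := by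
  have hp : (p : ℚ_[p]) ≠ 0 := NeZero.ne _
  have h : ‖(p : ℚ_[p]) ^ (-x.valuation) * x‖ = 1 := by
    rw [norm_mul, norm_zpow, norm_p, norm_eq_zpow_neg_valuation hx, inv_zpow', ← zpow_add₀]
    · simp
    · exact NeZero.ne _
  refine ⟨mkUnits h, ?_⟩
  rw [mkUnits_eq, ← mul_assoc, ← zpow_add₀ hp, add_neg_cancel, zpow_zero, one_mul]

theorem norm_p_mul_sq_ne_norm_sq (r : ℚ_[p]) {s : ℚ_[p]} (hs : s ≠ 0) :
    ‖(p : ℚ_[p]) * r ^ 2‖ ≠ ‖s ^ 2‖ := by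
  rcases eq_or_ne r 0 with rfl | hr
  · simpa [eq_comm] using hs
  have hp : (p : ℚ_[p]) ≠ 0 := NeZero.ne _
  intro h
  rw [norm_eq_zpow_neg_valuation (mul_ne_zero hp (pow_ne_zero 2 hr)),
    norm_eq_zpow_neg_valuation (pow_ne_zero 2 hs),
    zpow_right_inj₀ (by exact_mod_cast (Fact.out : p.Prime).pos)
      (by exact_mod_cast (Fact.out : p.Prime).ne_one),
    valuation_mul hp (pow_ne_zero 2 hr), valuation_p, valuation_pow, valuation_pow] at h
  omega

theorem norm_p_mul_sq_ne_one (r : ℚ_[p]) : ‖(p : ℚ_[p]) * r ^ 2‖ ≠ 1 := by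
  simpa using norm_p_mul_sq_ne_norm_sq r (one_ne_zero (α := ℚ_[p]))

theorem norm_p_mul_unit_mul_sq (u : ℤ_[p]ˣ) (r : ℚ_[p]) :
    ‖p * ((u : ℤ_[p]) : ℚ_[p]) * r ^ 2‖ = ‖(p : ℚ_[p]) * r ^ 2‖ := by
  rw [norm_mul, norm_mul, norm_units, mul_one, norm_mul]

theorem conicSolvable_units_of_residues (hp : p ≠ 2) {u w : ℤ_[p]ˣ} {r s : ZMod p} (hr : r ≠ 0)
    (h : toZMod (u : ℤ_[p]) * r ^ 2 + toZMod (w : ℤ_[p]) * s ^ 2 = 1) :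
    ConicSolvable ((u : ℤ_[p]) : ℚ_[p]) ((w : ℤ_[p]) : ℚ_[p]) := by
  obtain ⟨s, rfl⟩ := ZMod.ringHom_surjective toZMod s
  have hres : toZMod ((u⁻¹ : ℤ_[p]ˣ) * (1 - w * s ^ 2) : ℤ_[p]) = r ^ 2 := by
    rw [map_mul, map_sub, map_one, map_mul, map_pow, ← h, add_sub_cancel_right, ← mul_assoc,
      ← map_mul, Units.inv_mul, map_one, one_mul]
  obtain ⟨c, hc⟩ := isSquare_of_isSquare_toZMod hp (by rw [hres]; exact pow_ne_zero 2 hr)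
    (hres ▸ IsSquare.sq r)
  refine ConicSolvable.map Coe.ringHom ⟨c, s, ?_⟩
  rw [← sq] at hc
  rw [← hc, ← mul_assoc, Units.mul_inv, one_mul, sub_add_cancel]

theorem conicSolvable_units (hp : p ≠ 2) (u w : ℤ_[p]ˣ) :
    ConicSolvable ((u : ℤ_[p]) : ℚ_[p]) ((w : ℤ_[p]) : ℚ_[p]) := by
  obtain ⟨r, s, h⟩ := FiniteField.exists_mul_sq_add_mul_sq_eq_one
    (by rwa [ZMod.ringChar_zmod_n]) (toZMod_units_ne_zero u) (toZMod_units_ne_zero w)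
  rcases eq_or_ne r 0 with rfl | hr
  · have hs : s ≠ 0 := by rintro rfl; simp at h
    exact (conicSolvable_units_of_residues hp hs (r := s) (s := 0) (by simpa using h)).symm
  · exact conicSolvable_units_of_residues hp hr h

theorem isSquare_of_conicSolvable_unit_p_mul {u w : ℤ_[p]ˣ}
    (h : ConicSolvable ((u : ℤ_[p]) : ℚ_[p]) (p * (w : ℤ_[p]))) :
    IsSquare (toZMod (u : ℤ_[p])) := by
  obtain ⟨r, s, h⟩ := h
  have hA : ‖((u : ℤ_[p]) : ℚ_[p]) * r ^ 2‖ = ‖r ^ 2‖ := by rw [norm_mul, norm_units, one_mul]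
  rcases IsUltrametricDist.norm_add_eq_one_cases (h ▸ norm_one)
    (norm_p_mul_unit_mul_sq w s ▸ norm_p_mul_sq_ne_one s) with ⟨hA1, hB1⟩ | ⟨hAB, hB1⟩
  · have hr : ‖r‖ = 1 := by
      rwa [hA, norm_pow, pow_eq_one_iff_of_nonneg (norm_nonneg r) two_ne_zero] at hA1
    obtain ⟨R, rfl⟩ : ∃ R : ℤ_[p]ˣ, ((R : ℤ_[p]) : ℚ_[p]) = r := ⟨mkUnits hr, rfl⟩
    obtain ⟨B, hB⟩ : ∃ B : ℤ_[p], (B : ℚ_[p]) = p * ((w : ℤ_[p]) : ℚ_[p]) * s ^ 2 :=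
      ⟨⟨_, hB1.le⟩, rfl⟩
    rw [← hB] at h hB1
    have hres := congrArg toZMod
      (show (u : ℤ_[p]) * R ^ 2 + B = 1 from PadicInt.ext (by simpa using h))
    rw [map_add, map_mul, map_pow, map_one, toZMod_eq_zero_iff.mpr hB1, add_zero] at hres
    have hR := toZMod_units_ne_zero R
    exact ⟨(toZMod (R : ℤ_[p]))⁻¹, by field_simp; linear_combination hres⟩
  · rw [hA, norm_p_mul_unit_mul_sq] at hAB
    rcases eq_or_ne r 0 with rfl | hr
    · rw [norm_p_mul_unit_mul_sq, ← hAB] at hB1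
      norm_num at hB1
    · exact absurd hAB.symm (norm_p_mul_sq_ne_norm_sq s hr)

theorem conicSolvable_unit_p_mul_iff (hp : p ≠ 2) (u w : ℤ_[p]ˣ) :
    ConicSolvable ((u : ℤ_[p]) : ℚ_[p]) (p * (w : ℤ_[p])) ↔ IsSquare (toZMod (u : ℤ_[p])) := by
  refine ⟨isSquare_of_conicSolvable_unit_p_mul, fun h ↦ ?_⟩
  obtain ⟨c, hc⟩ := isSquare_of_isSquare_toZMod hp (toZMod_units_ne_zero u) h
  exact .of_isSquare_left _ (by simp) ⟨c, by rw [hc, PadicInt.coe_mul]⟩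

theorem isSquare_of_conicSolvable_p_mul_p_mul {u w : ℤ_[p]ˣ}
    (h : ConicSolvable (p * ((u : ℤ_[p]) : ℚ_[p])) (p * ((w : ℤ_[p]) : ℚ_[p]))) :
    IsSquare (-toZMod (u : ℤ_[p]) / toZMod (w : ℤ_[p])) := by
  have hp0 : (p : ℚ_[p]) ≠ 0 := NeZero.ne _
  obtain ⟨r, s, h⟩ := h
  -- Neither summand has norm `1` (odd valuation), so both have the same norm `> 1`.
  rcases IsUltrametricDist.norm_add_eq_one_cases (h ▸ norm_one)
    (norm_p_mul_unit_mul_sq w s ▸ norm_p_mul_sq_ne_one s) with ⟨hA1, -⟩ | ⟨hAB, hB1⟩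
  · exact absurd (norm_p_mul_unit_mul_sq u r ▸ hA1) (norm_p_mul_sq_ne_one r)
  simp only [norm_p_mul_unit_mul_sq] at hAB hB1
  have hs : s ≠ 0 := by rintro rfl; norm_num at hB1
  have hrs : ‖r / s‖ = 1 := by
    rw [norm_mul, norm_mul, mul_right_inj' (norm_ne_zero_iff.mpr hp0), norm_pow,
      norm_pow, sq_eq_sq₀ (norm_nonneg r) (norm_nonneg s)] at hAB
    rw [norm_div, hAB, div_self (norm_ne_zero_iff.mpr hs)]
  obtain ⟨T, hT⟩ : ∃ T : ℤ_[p]ˣ, ((T : ℤ_[p]) : ℚ_[p]) = r / s := ⟨mkUnits hrs, rfl⟩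
  have hE : ‖((p : ℚ_[p]) * s ^ 2)⁻¹‖ < 1 := by
    rw [norm_inv]; exact inv_lt_one_of_one_lt₀ hB1
  obtain ⟨E, hE'⟩ : ∃ E : ℤ_[p], (E : ℚ_[p]) = ((p : ℚ_[p]) * s ^ 2)⁻¹ := ⟨⟨_, hE.le⟩, rfl⟩
  have hres := congrArg toZMod (show (u : ℤ_[p]) * T ^ 2 + w = E from PadicInt.ext (by
    push_cast
    rw [hT, hE']
    field_simp
    linear_combination h))
  have hE0 : toZMod E = 0 := toZMod_eq_zero_iff.mpr (by rwa [PadicInt.norm_def, hE'])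
  rw [map_add, map_mul, map_pow, hE0] at hres
  have hu := toZMod_units_ne_zero u
  have hT0 := toZMod_units_ne_zero T
  rw [eq_neg_of_add_eq_zero_right hres]
  exact ⟨(toZMod (T : ℤ_[p]))⁻¹, by field_simp⟩

theorem conicSolvable_p_mul_p_mul_iff (hp : p ≠ 2) (u w : ℤ_[p]ˣ) :
    ConicSolvable (p * ((u : ℤ_[p]) : ℚ_[p])) (p * ((w : ℤ_[p]) : ℚ_[p])) ↔
      IsSquare (-toZMod (u : ℤ_[p]) / toZMod (w : ℤ_[p])) := by
  refine ⟨isSquare_of_conicSolvable_p_mul_p_mul, fun h ↦ ?_⟩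
  have hp0 : (p : ℚ_[p]) ≠ 0 := NeZero.ne _
  obtain ⟨c, hc⟩ := isSquare_of_isSquare_toZMod hp (z := -(u * w⁻¹ : ℤ_[p]ˣ))
    (by simpa using ⟨toZMod_units_ne_zero u, toZMod_units_ne_zero w⟩)
    (by simpa [div_eq_mul_inv] using h)
  refine .of_isSquare_neg_div two_ne_zero (by simp [hp0]) (by simp [hp0]) ⟨c, ?_⟩
  have hc' := congrArg ((↑) : ℤ_[p] → ℚ_[p]) hc
  push_cast at hc'
  rw [← hc']
  field_simp
  rw [← PadicInt.coe_mul, Units.mul_inv, PadicInt.coe_one]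

theorem conicSolvable_zpow_mul_iff (hp : p ≠ 2) (a b : ℤ) (u w : ℤ_[p]ˣ) :
    ConicSolvable ((p : ℚ_[p]) ^ a * (u : ℤ_[p])) ((p : ℚ_[p]) ^ b * (w : ℤ_[p])) ↔
      IsSquare (residueSymbol a b (toZMod (u : ℤ_[p])) (toZMod (w : ℤ_[p]))) := by
  have hp0 : (p : ℚ_[p]) ≠ 0 := NeZero.ne _
  rw [conicSolvable_zpow_mul_left_iff_emod_two hp0, ConicSolvable.comm,
    conicSolvable_zpow_mul_left_iff_emod_two hp0, ConicSolvable.comm,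
    isSquare_residueSymbol_iff_emod_two (toZMod_units_ne_zero u) (toZMod_units_ne_zero w)]
  rcases Int.emod_two_eq a with ha | ha <;> rcases Int.emod_two_eq b with hb | hb <;>
    simp only [ha, hb, residueSymbol, zpow_zero, zpow_one, one_mul, mul_one, mul_zero,
      neg_zero, zpow_neg_one, neg_one_mul]
  · exact iff_of_true (conicSolvable_units hp u w) IsSquare.one
  · exact conicSolvable_unit_p_mul_iff hp u w
  · rw [ConicSolvable.comm, isSquare_inv]
    exact conicSolvable_unit_p_mul_iff hp w u
  · rw [← div_eq_mul_inv]
    exact conicSolvable_p_mul_p_mul_iff hp u w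

end Padic

section

open PadicInt

variable {p : ℕ} [Fact p.Prime]

theorem padicRes_eq_toZMod {t : ℚ_[p]ˣ} {z : ℤ_[p]} (h : (t : ℚ_[p]) = z) :
    padicRes p t = toZMod z := by
  rw [padicRes, dif_pos (h ▸ z.norm_le_one)]
  exact congrArg toZMod (PadicInt.ext h)

theorem padicRes_padicTame {x y : ℚ_[p]ˣ} {a b : ℤ} {u w : ℤ_[p]ˣ}
    (hx : (x : ℚ_[p]) = p ^ a * (u : ℤ_[p])) (hy : (y : ℚ_[p]) = p ^ b * (w : ℤ_[p])) :
    padicRes p (padicTame p x y) = residueSymbol a b (toZMod (u : ℤ_[p])) (toZMod (w : ℤ_[p])) := by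
  have hp0 : (p : ℚ_[p]) ≠ 0 := NeZero.ne _
  have ha : (x : ℚ_[p]).valuation = a := hx ▸ Padic.valuation_zpow_mul_unit a u
  have hb : (y : ℚ_[p]).valuation = b := hy ▸ Padic.valuation_zpow_mul_unit b w
  rw [padicRes_eq_toZMod (z := ((-1) ^ (a * b) * u ^ b * w ^ (-a) : ℤ_[p]ˣ))]
  · simp [residueSymbol, map_units_zpow]
  · simp only [padicTame, ha, hb, Units.val_mul, Units.val_zpow_eq_zpow_val, Units.val_neg,
      Units.val_one, PadicInt.coe_mul, coe_units_zpow, PadicInt.coe_neg, PadicInt.coe_one]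
    rw [hx, hy, mul_zpow, mul_zpow, ← zpow_mul, ← zpow_mul, mul_neg, mul_comm b a, zpow_neg]
    field_simp

theorem conicSolvable_iff_isSquare_padicRes_padicTame (hp : p ≠ 2) (x y : ℚ_[p]ˣ) :
    ConicSolvable (x : ℚ_[p]) y ↔ IsSquare (padicRes p (padicTame p x y)) := by
  obtain ⟨u, hu⟩ := Padic.exists_eq_zpow_mul_unit x.ne_zero
  obtain ⟨w, hw⟩ := Padic.exists_eq_zpow_mul_unit y.ne_zero
  rw [padicRes_padicTame hu hw, ← Padic.conicSolvable_zpow_mul_iff hp, ← hu, ← hw]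

theorem padicRes_padicTame_ne_zero (x y : ℚ_[p]ˣ) : padicRes p (padicTame p x y) ≠ 0 := by
  obtain ⟨u, hu⟩ := Padic.exists_eq_zpow_mul_unit x.ne_zero
  obtain ⟨w, hw⟩ := Padic.exists_eq_zpow_mul_unit y.ne_zero
  rw [padicRes_padicTame hu hw]
  exact residueSymbol_ne_zero _ _ (toZMod_units_ne_zero u) (toZMod_units_ne_zero w)

end

/-- For an odd prime `p` and `x, y ∈ ℚ_pˣ`, the conic `x·R² + y·S² = 1` has a solution
over `ℚ_p` iff `s_p(x,y)^((p-1)/2) = 1`, i.e. iff the tame symbol `s_p(x,y)` is a square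
in `(ℤ/pℤ)ˣ`. -/
theorem padic_conic_solvable_iff (p : ℕ) [Fact p.Prime] (hp : p ≠ 2) (x y : ℚ_[p]ˣ) :
    ((∃ R S : ℚ_[p], (x : ℚ_[p]) * R ^ 2 + (y : ℚ_[p]) * S ^ 2 = 1) ↔
      padicRes p (padicTame p x y) ^ ((p - 1) / 2) = 1) ∧
    ((∃ R S : ℚ_[p], (x : ℚ_[p]) * R ^ 2 + (y : ℚ_[p]) * S ^ 2 = 1) ↔
      IsSquare (padicRes p (padicTame p x y))) := by
  have key := conicSolvable_iff_isSquare_padicRes_padicTame hp x y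
  have hexp : (p - 1) / 2 = p / 2 := by
    obtain ⟨k, hk⟩ := (Fact.out : p.Prime).odd_of_ne_two hp
    omega
  rw [hexp]
  exact ⟨key.trans (ZMod.euler_criterion p (padicRes_padicTame_ne_zero x y)), key⟩
end

section
/- Let x, y ∈ ℚ_2ˣ and let s_2(x, y) ∈ {1, -1} be defined by s_2(x, y) = (-1)^{ε(u_x)ε(u_y) + v(x)ω(u_y) + v(y)ω(u_x)}, where x = 2^{v(x)} u_x, y = 2^{v(y)} u_y with u_x, u_y ∈ ℤ_2ˣ, ε(u) is the reduction mod 2 of (u-1)/2 and ω(u) is the reduction mod 2 of (u²-1)/8. Then the equation x·R² + y·S² = 1 has a solution (R, S) ∈ ℚ_2 × ℚ_2 if and only if s_2(x, y) = 1. -/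
/-!
Both sides depend only on the square classes of `x` and `y`, that is on `v mod 2` and on
`u mod 8`, so `x` and `y` may be replaced by `2^a m` with `a < 2` and `m ∈ {1, 3, 5, 7}`.
For `X, Y ∈ ℤ_2` dividing `2`, the conic `X R² + Y S² = 1` has a `ℚ_2`-point iff the projective
conic `X r² + Y s² = t²` has a point mod `16` with one coordinate equal to `1`: dividing a
`ℚ_2`-point by its coordinate of largest norm gives one direction; for the other, solve for the
coordinate equal to `1`, whose coefficient divides `2`, so that the congruence mod `16` becomes
one mod `8` after division, and every element of `1 + 8ℤ_2` is a square by Hensel's lemma.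
What is left is a finite computation in `ZMod 16`.
-/

open PadicInt

section Field

variable {K : Type*} [Field K] {X Y : K}

theorem exists_conic_eq_one_of_eq_sq {r s t : K} (ht : t ≠ 0)
    (h : X * r ^ 2 + Y * s ^ 2 = t ^ 2) : ∃ R S : K, X * R ^ 2 + Y * S ^ 2 = 1 :=
  ⟨r / t, s / t, by field_simp; linear_combination h⟩

theorem exists_conic_mul_sq_eq_one_iff {t s : K} (ht : t ≠ 0) (hs : s ≠ 0) :
    (∃ R S : K, X * t ^ 2 * R ^ 2 + Y * s ^ 2 * S ^ 2 = 1) ↔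
      ∃ R S : K, X * R ^ 2 + Y * S ^ 2 = 1 :=
  ⟨fun ⟨R, S, h⟩ => ⟨t * R, s * S, by linear_combination h⟩,
    fun ⟨R, S, h⟩ => ⟨R / t, S / s, by field_simp; linear_combination h⟩⟩

end Field

theorem zpow_eq_pow_val_mul_sq {G₀ : Type*} [GroupWithZero G₀] {q : G₀} (hq : q ≠ 0) (v : ℤ) :
    q ^ v = q ^ (v : ZMod 2).val * (q ^ (v / 2)) ^ 2 := by
  have hv : v = ((v : ZMod 2).val : ℤ) + v / 2 * 2 := by rw [ZMod.val_intCast]; omega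
  conv_lhs => rw [hv, zpow_add₀ hq, zpow_mul, zpow_natCast]
  norm_cast

theorem Nat.sq_eq_one_add_eight_mul_of_odd {m : ℕ} (hm : Odd m) :
    m ^ 2 = 1 + 8 * ((m ^ 2 - 1) / 8) := by
  have := Nat.eight_dvd_sq_sub_one_of_odd hm
  have := Nat.one_le_pow 2 m hm.pos
  omega

/-- The points `(r : s : t)` of the projective conic `X r² + Y s² = t²` with `r = 1`, `s = 1`
or `t = 1`. -/
def HasChartPoint {A : Type*} [CommRing A] (X Y : A) : Prop :=
  (∃ s t : A, X + Y * s ^ 2 = t ^ 2) ∨ (∃ r t : A, X * r ^ 2 + Y = t ^ 2) ∨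
    ∃ r s : A, X * r ^ 2 + Y * s ^ 2 = 1

namespace HasChartPoint

variable {A B : Type*} [CommRing A] [CommRing B] {X Y : A}

instance [Fintype A] [DecidableEq A] : Decidable (HasChartPoint X Y) :=
  inferInstanceAs (Decidable (_ ∨ _ ∨ _))

theorem swap (h : HasChartPoint X Y) : HasChartPoint Y X := by
  rcases h with ⟨s, t, h⟩ | ⟨r, t, h⟩ | ⟨r, s, h⟩
  · exact Or.inr (Or.inl ⟨s, t, by linear_combination h⟩)
  · exact Or.inl ⟨r, t, by linear_combination h⟩
  · exact Or.inr (Or.inr ⟨s, r, by linear_combination h⟩)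

theorem map (f : A →+* B) (h : HasChartPoint X Y) : HasChartPoint (f X) (f Y) := by
  rcases h with ⟨s, t, h⟩ | ⟨r, t, h⟩ | ⟨r, s, h⟩
  · exact Or.inl ⟨f s, f t, by simpa using congrArg f h⟩
  · exact Or.inr (Or.inl ⟨f r, f t, by simpa using congrArg f h⟩)
  · exact Or.inr (Or.inr ⟨f r, f s, by simpa using congrArg f h⟩)

end HasChartPoint

namespace PadicInt

section General

variable {p : ℕ} [Fact p.Prime]

theorem exists_coe_eq {q : ℚ_[p]} (hq : ‖q‖ ≤ 1) : ∃ z : ℤ_[p], (z : ℚ_[p]) = q :=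
  ⟨⟨q, hq⟩, rfl⟩

theorem hasChartPoint_of_exists {X Y : ℤ_[p]}
    (h : ∃ R S : ℚ_[p], X * R ^ 2 + Y * S ^ 2 = 1) : HasChartPoint X Y := by
  obtain ⟨R, S, h⟩ := h
  wlog hSR : ‖S‖ ≤ ‖R‖ generalizing X Y R S
  · exact (this S R (by linear_combination h) (le_of_not_ge hSR)).swap
  by_cases hR : ‖R‖ ≤ 1
  · obtain ⟨r, rfl⟩ := exists_coe_eq hR
    obtain ⟨s, rfl⟩ := exists_coe_eq (hSR.trans hR)
    exact Or.inr (Or.inr ⟨r, s, PadicInt.ext (by push_cast; exact h)⟩)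
  have hR0 : R ≠ 0 := by rintro rfl; simp at hR
  obtain ⟨t, ht⟩ := exists_coe_eq (show ‖R⁻¹‖ ≤ 1 by
    rw [norm_inv]; exact inv_le_one_of_one_le₀ (by linarith))
  obtain ⟨s, hs⟩ := exists_coe_eq (show ‖S / R‖ ≤ 1 by
    rw [norm_div]; exact div_le_one_of_le₀ hSR (norm_nonneg _))
  refine Or.inl ⟨s, t, PadicInt.ext ?_⟩
  push_cast [hs, ht]
  field_simp
  linear_combination h

theorem exists_conic_eq_one_of_eq_sq {X Y r s t : ℤ_[p]} (ht : t ≠ 0)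
    (h : X * r ^ 2 + Y * s ^ 2 = t ^ 2) : ∃ R S : ℚ_[p], X * R ^ 2 + Y * S ^ 2 = 1 :=
  _root_.exists_conic_eq_one_of_eq_sq (r := r) (s := s) (coe_ne_zero.2 ht) (by
    simpa using congrArg ((↑) : ℤ_[p] → ℚ_[p]) h)

theorem dvd_sub_of_toZModPow_eq {n : ℕ} {a b : ℤ_[p]} (h : toZModPow n a = toZModPow n b) :
    (p : ℤ_[p]) ^ n ∣ a - b := by
  rw [← Ideal.mem_span_singleton, ← ker_toZModPow, RingHom.mem_ker, map_sub, h, sub_self]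

theorem exists_ne_zero_toZModPow_eq {n : ℕ} (t : ZMod (p ^ n)) :
    ∃ t' : ℤ_[p], t' ≠ 0 ∧ toZModPow n t' = t :=
  ⟨(t.val + p ^ n : ℕ), Nat.cast_ne_zero.2 (by have := (Fact.out : p.Prime).pos; positivity),
    by rw [map_natCast, Nat.cast_add, ZMod.natCast_self, add_zero, ZMod.natCast_zmod_val]⟩

end General

theorem exists_sq_eq_one_add_eight_mul (c : ℤ_[2]) : ∃ w : ℤ_[2], w ^ 2 = 1 + 8 * c := by
  set F : Polynomial ℤ_[2] := Polynomial.X ^ 2 - Polynomial.C (1 + 8 * c)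
  have h2 : ‖(2 : ℤ_[2])‖ = 2⁻¹ := by simpa using norm_p (p := 2)
  have hF : ‖F.aeval (1 : ℤ_[2])‖ ≤ 8⁻¹ := by
    have : F.aeval (1 : ℤ_[2]) = -(2 ^ 3 * c) := by
      simp only [F, map_sub, map_pow, Polynomial.aeval_X, Polynomial.aeval_C,
        Algebra.algebraMap_self, RingHom.id_apply]
      ring
    rw [this, norm_neg, norm_mul, norm_pow, h2]
    nlinarith [norm_le_one c, norm_nonneg c]
  have hF' : F.derivative.aeval (1 : ℤ_[2]) = 2 := by simp [F]; norm_num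
  obtain ⟨w, hw, -⟩ := hensels_lemma (F := F) (a := 1) (by rw [hF', h2]; linarith)
  exact ⟨w, by simpa [F, sub_eq_zero] using hw⟩

theorem exists_eq_mul_sq_of_dvd_sub {X Z : ℤ_[2]} (hX : X ∣ 2) (h : 2 ^ 4 ∣ Z - X) :
    ∃ w : ℤ_[2], Z = X * w ^ 2 := by
  obtain ⟨d, hd⟩ := hX
  obtain ⟨k, hk⟩ := h
  obtain ⟨w, hw⟩ := exists_sq_eq_one_add_eight_mul (d * k)
  exact ⟨w, by rw [hw]; linear_combination hk + 8 * k * hd⟩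

theorem exists_conic_eq_one_of_toZModPow_r_eq_one {X Y : ℤ_[2]} (hX : X ∣ 2)
    {s t : ZMod (2 ^ 4)} (h : toZModPow 4 X + toZModPow 4 Y * s ^ 2 = t ^ 2) :
    ∃ R S : ℚ_[2], X * R ^ 2 + Y * S ^ 2 = 1 := by
  obtain ⟨s, -, rfl⟩ := exists_ne_zero_toZModPow_eq s
  obtain ⟨t, ht, rfl⟩ := exists_ne_zero_toZModPow_eq t
  have h16 : toZModPow 4 (t ^ 2 - Y * s ^ 2) = toZModPow 4 X := by
    simp only [map_sub, map_mul, map_pow]; linear_combination -h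
  obtain ⟨w, hw⟩ := exists_eq_mul_sq_of_dvd_sub hX (by simpa using dvd_sub_of_toZModPow_eq h16)
  exact exists_conic_eq_one_of_eq_sq (r := w) (s := s) ht (by linear_combination -hw)

theorem exists_conic_eq_one_of_toZModPow_t_eq_one {X Y : ℤ_[2]} {r s : ZMod (2 ^ 4)}
    (h : toZModPow 4 X * r ^ 2 + toZModPow 4 Y * s ^ 2 = 1) :
    ∃ R S : ℚ_[2], X * R ^ 2 + Y * S ^ 2 = 1 := by
  obtain ⟨r, -, rfl⟩ := exists_ne_zero_toZModPow_eq r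
  obtain ⟨s, -, rfl⟩ := exists_ne_zero_toZModPow_eq s
  have h16 : toZModPow 4 (X * r ^ 2 + Y * s ^ 2) = toZModPow 4 1 := by simpa using h
  obtain ⟨w, hw⟩ := exists_eq_mul_sq_of_dvd_sub (one_dvd 2)
    (by simpa using dvd_sub_of_toZModPow_eq h16)
  have hw0 : w ≠ 0 := by
    rintro rfl
    simp only [hw, map_mul, map_pow, map_zero, map_one] at h16
    exact absurd h16 (by decide)
  exact exists_conic_eq_one_of_eq_sq (r := r) (s := s) hw0 (by linear_combination hw)

theorem exists_conic_eq_one_iff_hasChartPoint {X Y : ℤ_[2]} (hX : X ∣ 2) (hY : Y ∣ 2) :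
    (∃ R S : ℚ_[2], X * R ^ 2 + Y * S ^ 2 = 1) ↔
      HasChartPoint (toZModPow 4 X) (toZModPow 4 Y) := by
  refine ⟨fun h => (hasChartPoint_of_exists h).map _, ?_⟩
  rintro (⟨s, t, h⟩ | ⟨r, t, h⟩ | ⟨r, s, h⟩)
  · exact exists_conic_eq_one_of_toZModPow_r_eq_one hX h
  · obtain ⟨R, S, h⟩ := exists_conic_eq_one_of_toZModPow_r_eq_one (Y := X) (s := r) (t := t) hY
      (by linear_combination h)
    exact ⟨S, R, by linear_combination h⟩
  · exact exists_conic_eq_one_of_toZModPow_t_eq_one h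

theorem natCast_two_pow_mul_dvd_two {a m : ℕ} (ha : a < 2) (hm : Odd m) :
    ((2 ^ a * m : ℕ) : ℤ_[2]) ∣ 2 := by
  have hmu : IsUnit (m : ℤ_[2]) :=
    isUnit_iff.2 (norm_natCast_eq_one_iff.2 (Nat.coprime_two_left.2 hm))
  push_cast
  rw [hmu.mul_right_dvd, ← pow_one (2 : ℤ_[2])]
  exact pow_dvd_pow 2 (by omega)

theorem units_exists_odd_eq_add_eight_mul (U : ℤ_[2]ˣ) :
    ∃ m : ℕ, m < 8 ∧ Odd m ∧ ∃ δ : ℤ_[2], (U : ℤ_[2]) = m + 8 * δ := by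
  obtain ⟨δ, hδ⟩ := Ideal.mem_span_singleton.1 (appr_spec 3 (U : ℤ_[2]))
  have hU : (U : ℤ_[2]) = appr (U : ℤ_[2]) 3 + 8 * δ := by
    push_cast at hδ; linear_combination hδ
  refine ⟨appr (U : ℤ_[2]) 3, appr_lt _ 3, Nat.not_even_iff_odd.1 fun ⟨k, hk⟩ => ?_, δ, hU⟩
  have h2 : ((2 : ℕ) : ℤ_[2]) ∣ U := ⟨k + 4 * δ, by rw [hU, hk]; push_cast; ring⟩
  have := (norm_lt_one_iff_dvd _).2 h2
  rw [norm_units] at this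
  exact this.false

theorem exists_eq_natCast_mul_sq {U : ℤ_[2]ˣ} {m : ℕ} {δ : ℤ_[2]} (hm : Odd m)
    (hU : (U : ℤ_[2]) = m + 8 * δ) (v : ℤ) :
    ∃ t : ℚ_[2], t ≠ 0 ∧
      (2 : ℚ_[2]) ^ v * (U : ℤ_[2]) = ((2 ^ (v : ZMod 2).val * m : ℕ) : ℤ_[2]) * t ^ 2 := by
  have hm2 := congrArg (Nat.cast : ℕ → ℤ_[2]) (Nat.sq_eq_one_add_eight_mul_of_odd hm)
  push_cast at hm2
  obtain ⟨w, hw⟩ := exists_sq_eq_one_add_eight_mul (((m ^ 2 - 1) / 8 : ℕ) + m * δ)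
  have hUm : ((U : ℤ_[2]) : ℚ_[2]) * m = (w : ℚ_[2]) ^ 2 := by
    have : (U : ℤ_[2]) * m = w ^ 2 := by rw [hw, hU]; linear_combination hm2
    simpa using congrArg ((↑) : ℤ_[2] → ℚ_[2]) this
  have hm0 : (m : ℚ_[2]) ≠ 0 := Nat.cast_ne_zero.2 hm.pos.ne'
  have hw0 : (w : ℚ_[2]) ≠ 0 := by
    rintro h
    rw [h, zero_pow two_ne_zero] at hUm
    exact mul_ne_zero (coe_ne_zero.2 U.ne_zero) hm0 hUm
  refine ⟨2 ^ (v / 2) * w / m, div_ne_zero (mul_ne_zero (zpow_ne_zero _ two_ne_zero) hw0) hm0, ?_⟩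
  rw [zpow_eq_pow_val_mul_sq two_ne_zero v, coe_natCast]
  push_cast
  field_simp
  linear_combination hUm

theorem toZMod_add_two_mul (a b : ℤ_[2]) : toZMod (a + 2 * b) = toZMod a := by
  rw [map_add, map_mul, map_ofNat, show (2 : ZMod 2) = 0 from rfl, zero_mul, add_zero]

end PadicInt

-- The values of `ε` and `ω` at a unit `u ≡ m (mod 8)`.
def oddEps (m : ℕ) : ZMod 2 := ((m - 1) / 2 : ℕ)

def oddOmega (m : ℕ) : ZMod 2 := ((m ^ 2 - 1) / 8 : ℕ)

section UnitInvariants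

variable {U : ℤ_[2]ˣ} {m : ℕ} {δ : ℤ_[2]}

theorem eps_eq_oddEps {ε : ℤ_[2]ˣ → ZMod 2}
    (hε : ∀ a : ℤ_[2]ˣ, ∃ b : ℤ_[2], (a : ℤ_[2]) = 1 + 2 * b ∧ ε a = PadicInt.toZMod b)
    (hm : Odd m) (hU : (U : ℤ_[2]) = m + 8 * δ) : ε U = oddEps m := by
  obtain ⟨b, hb, hεb⟩ := hε U
  obtain ⟨k, rfl⟩ := hm
  have hb' : b = k + 2 * (2 * δ) :=
    mul_left_cancel₀ two_ne_zero (by push_cast at hU; linear_combination hU - hb)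
  rw [hεb, hb', PadicInt.toZMod_add_two_mul, map_natCast, oddEps]
  congr 2
  omega

theorem omega_eq_oddOmega {ω : ℤ_[2]ˣ → ZMod 2}
    (hω : ∀ a : ℤ_[2]ˣ, ∃ c : ℤ_[2], (a : ℤ_[2]) ^ 2 = 1 + 8 * c ∧ ω a = PadicInt.toZMod c)
    (hm : Odd m) (hU : (U : ℤ_[2]) = m + 8 * δ) : ω U = oddOmega m := by
  obtain ⟨c, hc, hωc⟩ := hω U
  have hm2 := congrArg (Nat.cast : ℕ → ℤ_[2]) (Nat.sq_eq_one_add_eight_mul_of_odd hm)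
  push_cast at hm2
  have hc' : c = ((m ^ 2 - 1) / 8 : ℕ) + 2 * (m * δ + 4 * δ ^ 2) :=
    mul_left_cancel₀ (by norm_num : (8 : ℤ_[2]) ≠ 0)
      (by linear_combination hU * (U + m + 8 * δ) + hm2 - hc)
  rw [hωc, hc', PadicInt.toZMod_add_two_mul, map_natCast, oddOmega]

end UnitInvariants

set_option synthInstance.maxSize 1024 in
theorem hasChartPoint_two_pow_mul_odd_iff :
    ∀ a b : ZMod 2, ∀ m : ℕ, m < 8 → Odd m → ∀ n : ℕ, n < 8 → Odd n →
      (HasChartPoint ((2 ^ a.val * m : ℕ) : ZMod (2 ^ 4)) ((2 ^ b.val * n : ℕ) : ZMod (2 ^ 4)) ↔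
        (-1 : ℤˣ) ^ (oddEps m * oddEps n + a * oddOmega n + b * oddOmega m).val = 1) := by
  decide

/-- Given the decomposition `x = 2^(v x) · u x` of each `x ∈ ℚ_2ˣ` (with `u x ∈ ℤ_2ˣ`),
and `ε, ω : ℤ_2ˣ → ℤ/2ℤ` the reductions mod 2 of `(u-1)/2` and `(u²-1)/8`, the conic
`x·R² + y·S² = 1` has a solution over `ℚ_2` iff
`s₂(x,y) = (-1)^(ε(u_x)ε(u_y) + v(x)ω(u_y) + v(y)ω(u_x)) = 1`. -/
theorem q2_conic_solvable_iff
    (v : ℚ_[2]ˣ → ℤ) (u : ℚ_[2]ˣ → ℤ_[2]ˣ)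
    (hvu : ∀ x : ℚ_[2]ˣ, (x : ℚ_[2]) = 2 ^ (v x) * ((u x : ℤ_[2]) : ℚ_[2]))
    (ε ω : ℤ_[2]ˣ → ZMod 2)
    (hε : ∀ a : ℤ_[2]ˣ, ∃ b : ℤ_[2], (a : ℤ_[2]) = 1 + 2 * b ∧ ε a = PadicInt.toZMod b)
    (hω : ∀ a : ℤ_[2]ˣ, ∃ c : ℤ_[2], (a : ℤ_[2]) ^ 2 = 1 + 8 * c ∧ ω a = PadicInt.toZMod c)
    (x y : ℚ_[2]ˣ) :
    (∃ R S : ℚ_[2], (x : ℚ_[2]) * R ^ 2 + (y : ℚ_[2]) * S ^ 2 = 1) ↔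
      (-1 : ℤˣ) ^
        (ε (u x) * ε (u y) + (v x : ZMod 2) * ω (u y) + (v y : ZMod 2) * ω (u x)).val
        = 1 := by
  obtain ⟨m, hm8, hm, δ, hux⟩ := PadicInt.units_exists_odd_eq_add_eight_mul (u x)
  obtain ⟨n, hn8, hn, γ, huy⟩ := PadicInt.units_exists_odd_eq_add_eight_mul (u y)
  obtain ⟨t, ht, hxt⟩ := PadicInt.exists_eq_natCast_mul_sq hm hux (v x)
  obtain ⟨s, hs, hys⟩ := PadicInt.exists_eq_natCast_mul_sq hn huy (v y)
  rw [hvu x, hvu y, hxt, hys, exists_conic_mul_sq_eq_one_iff ht hs,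
    PadicInt.exists_conic_eq_one_iff_hasChartPoint
      (PadicInt.natCast_two_pow_mul_dvd_two (ZMod.val_lt _) hm)
      (PadicInt.natCast_two_pow_mul_dvd_two (ZMod.val_lt _) hn),
    map_natCast, map_natCast, eps_eq_oddEps hε hm hux, eps_eq_oddEps hε hn huy,
    omega_eq_oddOmega hω hm hux, omega_eq_oddOmega hω hn huy]
  exact hasChartPoint_two_pow_mul_odd_iff _ _ m hm8 hm n hn8 hn
end

section
/- Let k be a field and F = k((T)) the field of formal Laurent series over k, with T-adic valuation v : Fˣ → ℤ (v(x) is the order of x). For x, y ∈ Fˣ, the element t(x, y) = (-1)^{v(x)v(y)} · x^{v(y)} · y^{-v(x)} has order 0, i.e. lies in k[[T]]ˣ, and the map s : Fˣ × Fˣ → kˣ sending (x, y) to the constant coefficient of t(x, y) is a symbol on F with values in the multiplicative group kˣ: it is multiplicative in each variable and s(x, y) = 1 whenever x + y = 1. -/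
/-- The element `(-1)^(v(x)v(y)) · x^(v(y)) · y^(-v(x))` of `k((T))ˣ`, where `v` is the
`T`-adic valuation (the order). -/
noncomputable def lsTame (k : Type*) [Field k] (x y : (LaurentSeries k)ˣ) :
    (LaurentSeries k)ˣ :=
  (-1) ^ ((x : LaurentSeries k).order * (y : LaurentSeries k).order) *
    x ^ (y : LaurentSeries k).order * y ^ (-(x : LaurentSeries k).order)

/-!
Over a domain, the order and the leading coefficient are homomorphisms on the units of a Hahn
series ring. Hence `t(x, y)` has order `v(y)v(x) - v(x)v(y) = 0`, so its constant coefficient is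
its leading coefficient `(-1)^(v(x)v(y)) lc(x)^(v(y)) lc(y)^(-v(x))`, which is visibly
bimultiplicative. For `x + y = 1`: if `v(x) < 0` then `y = 1 - x` has order `v(x)` and leading
coefficient `-lc(x)`, leaving `(-1)^(v(x)(v(x) - 1)) = 1`; if `v(x) > 0` then `y` has order `0`
and leading coefficient `1`. The remaining cases follow from `s(y, x) = s(x, y)⁻¹`.
-/

open HahnSeries

namespace HahnSeries

section OneSub

variable {Γ R : Type*} [Zero Γ] [LinearOrder Γ] [Ring R] {x : R⟦Γ⟧}

theorem order_eq_of_orderTop_eq {y : R⟦Γ⟧} (h : x.orderTop = y.orderTop) :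
    x.order = y.order := by
  by_cases hx : x = 0
  · rw [hx, orderTop_zero, eq_comm, orderTop_eq_top] at h
    rw [hx, h]
  · have hy : y ≠ 0 := orderTop_ne_top.mp (h ▸ orderTop_ne_top.mpr hx)
    exact_mod_cast (order_eq_orderTop_of_ne_zero hx).trans
      (h.trans (order_eq_orderTop_of_ne_zero hy).symm)

variable [Nontrivial R]

theorem orderTop_neg_lt_orderTop_one_of_order_neg (h : x.order < 0) :
    (-x).orderTop < (1 : R⟦Γ⟧).orderTop := by
  have hx : x ≠ 0 := by rintro rfl; exact h.ne order_zero
  rw [orderTop_neg, orderTop_one, ← order_eq_orderTop_of_ne_zero hx]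
  exact_mod_cast h

theorem order_one_sub_of_order_neg (h : x.order < 0) : (1 - x).order = x.order := by
  refine order_eq_of_orderTop_eq ?_
  rw [sub_eq_add_neg, orderTop_add_eq_right (orderTop_neg_lt_orderTop_one_of_order_neg h),
    orderTop_neg]

theorem leadingCoeff_one_sub_of_order_neg (h : x.order < 0) :
    (1 - x).leadingCoeff = -x.leadingCoeff := by
  rw [sub_eq_add_neg, leadingCoeff_add_eq_right (orderTop_neg_lt_orderTop_one_of_order_neg h),
    leadingCoeff_neg]

theorem orderTop_one_lt_orderTop_of_order_pos (h : 0 < x.order) :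
    (1 : R⟦Γ⟧).orderTop < x.orderTop := by
  rw [orderTop_one]
  exact zero_lt_orderTop_of_order h

theorem order_one_sub_of_order_pos (h : 0 < x.order) : (1 - x).order = 0 := by
  rw [order_eq_of_orderTop_eq (orderTop_sub (orderTop_one_lt_orderTop_of_order_pos h)),
    order_one]

theorem leadingCoeff_one_sub_of_order_pos (h : 0 < x.order) : (1 - x).leadingCoeff = 1 := by
  rw [leadingCoeff_sub (orderTop_one_lt_orderTop_of_order_pos h), leadingCoeff_one]

end OneSub

section Units

variable {Γ R : Type*} [AddCommGroup Γ] [LinearOrder Γ] [IsOrderedAddMonoid Γ]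

noncomputable def leadingCoeffHom [Semiring R] [NoZeroDivisors R] : R⟦Γ⟧ →* R where
  toFun := leadingCoeff
  map_one' := leadingCoeff_one
  map_mul' x y := leadingCoeff_mul x y

noncomputable def unitsLeadingCoeff [Semiring R] [NoZeroDivisors R] : R⟦Γ⟧ˣ →* Rˣ :=
  Units.map leadingCoeffHom

@[simp]
theorem val_unitsLeadingCoeff [Semiring R] [NoZeroDivisors R] (x : R⟦Γ⟧ˣ) :
    (unitsLeadingCoeff x : R) = (x : R⟦Γ⟧).leadingCoeff :=
  rfl

theorem unitsLeadingCoeff_neg [Ring R] [NoZeroDivisors R] (x : R⟦Γ⟧ˣ) :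
    unitsLeadingCoeff (-x) = -unitsLeadingCoeff x :=
  Units.ext leadingCoeff_neg

variable [Semiring R] [NoZeroDivisors R] [Nontrivial R]

noncomputable def unitsOrderHom : R⟦Γ⟧ˣ →* Multiplicative Γ where
  toFun x := .ofAdd (x : R⟦Γ⟧).order
  map_one' := by rw [Units.val_one, order_one, ofAdd_zero]
  map_mul' x y := by rw [Units.val_mul, order_mul x.ne_zero y.ne_zero, ofAdd_add]

theorem order_units_mul (x y : R⟦Γ⟧ˣ) :
    ((x * y : R⟦Γ⟧ˣ) : R⟦Γ⟧).order = (x : R⟦Γ⟧).order + (y : R⟦Γ⟧).order :=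
  congrArg Multiplicative.toAdd (map_mul unitsOrderHom x y)

theorem order_units_zpow (x : R⟦Γ⟧ˣ) (n : ℤ) :
    ((x ^ n : R⟦Γ⟧ˣ) : R⟦Γ⟧).order = n • (x : R⟦Γ⟧).order :=
  congrArg Multiplicative.toAdd (map_zpow unitsOrderHom x n)

end Units

end HahnSeries

namespace LaurentSeries

variable {k : Type*} [Field k]

theorem order_lsTame (x y : (LaurentSeries k)ˣ) :
    ((lsTame k x y : (LaurentSeries k)ˣ) : LaurentSeries k).order = 0 := by
  simp only [lsTame, order_units_mul, order_units_zpow, Units.val_neg, Units.val_one,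
    order_neg, order_one, smul_eq_mul]
  ring

noncomputable def tameSymbol (x y : (LaurentSeries k)ˣ) : kˣ :=
  unitsLeadingCoeff (lsTame k x y)

theorem tameSymbol_eq (x y : (LaurentSeries k)ˣ) :
    tameSymbol x y = (-1) ^ ((x : LaurentSeries k).order * (y : LaurentSeries k).order) *
      unitsLeadingCoeff x ^ (y : LaurentSeries k).order *
      unitsLeadingCoeff y ^ (-(x : LaurentSeries k).order) := by
  rw [tameSymbol, lsTame, map_mul, map_mul, map_zpow, map_zpow, map_zpow, unitsLeadingCoeff_neg,
    map_one]

theorem coe_tameSymbol (x y : (LaurentSeries k)ˣ) :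
    (tameSymbol x y : k) = ((lsTame k x y : (LaurentSeries k)ˣ) : LaurentSeries k).coeff 0 := by
  rw [tameSymbol, val_unitsLeadingCoeff, leadingCoeff_eq, order_lsTame]

theorem tameSymbol_mul_left (x x' y : (LaurentSeries k)ˣ) :
    tameSymbol (x * x') y = tameSymbol x y * tameSymbol x' y := by
  simp only [tameSymbol_eq, order_units_mul, map_mul, add_mul, neg_add, zpow_add, mul_zpow]
  simp only [mul_left_comm, mul_assoc]

theorem tameSymbol_mul_right (x y y' : (LaurentSeries k)ˣ) :
    tameSymbol x (y * y') = tameSymbol x y * tameSymbol x y' := by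
  simp only [tameSymbol_eq, order_units_mul, map_mul, mul_add, zpow_add, mul_zpow]
  simp only [mul_left_comm, mul_assoc]

theorem tameSymbol_swap (x y : (LaurentSeries k)ˣ) : tameSymbol y x = (tameSymbol x y)⁻¹ := by
  simp only [tameSymbol_eq, mul_inv, ← zpow_neg, neg_neg, mul_comm (y : LaurentSeries k).order]
  rw [zpow_neg (-1 : kˣ), ← inv_zpow, inv_neg_one, mul_right_comm]

theorem tameSymbol_of_add_eq_one_of_order_neg {x y : (LaurentSeries k)ˣ}
    (h : (x : LaurentSeries k) + y = 1) (hx : (x : LaurentSeries k).order < 0) :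
    tameSymbol x y = 1 := by
  have hy : (y : LaurentSeries k) = 1 - x := eq_sub_of_add_eq' h
  have hlc : unitsLeadingCoeff y = -unitsLeadingCoeff x :=
    Units.ext <| by
      rw [val_unitsLeadingCoeff, hy, leadingCoeff_one_sub_of_order_neg hx, Units.val_neg,
        val_unitsLeadingCoeff]
  rw [tameSymbol_eq, hy, order_one_sub_of_order_neg hx, hlc,
    neg_eq_neg_one_mul (unitsLeadingCoeff x), mul_zpow, mul_mul_mul_comm, ← zpow_add, ← zpow_add,
    add_neg_cancel, zpow_zero, mul_one]
  refine Even.neg_one_zpow ?_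
  convert Int.even_mul_pred_self (x : LaurentSeries k).order using 1
  ring

theorem tameSymbol_of_add_eq_one_of_order_pos {x y : (LaurentSeries k)ˣ}
    (h : (x : LaurentSeries k) + y = 1) (hx : 0 < (x : LaurentSeries k).order) :
    tameSymbol x y = 1 := by
  have hy : (y : LaurentSeries k) = 1 - x := eq_sub_of_add_eq' h
  have hlc : unitsLeadingCoeff y = 1 :=
    Units.ext <| by
      rw [val_unitsLeadingCoeff, hy, leadingCoeff_one_sub_of_order_pos hx, Units.val_one]
  rw [tameSymbol_eq, hy, order_one_sub_of_order_pos hx, hlc]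
  simp

theorem tameSymbol_of_add_eq_one {x y : (LaurentSeries k)ˣ}
    (h : (x : LaurentSeries k) + y = 1) : tameSymbol x y = 1 := by
  have h' : (y : LaurentSeries k) + x = 1 := by rw [add_comm, h]
  rcases lt_trichotomy (x : LaurentSeries k).order 0 with hx | hx | hx
  · exact tameSymbol_of_add_eq_one_of_order_neg h hx
  · rcases lt_trichotomy (y : LaurentSeries k).order 0 with hy | hy | hy
    · rw [← inv_inv (tameSymbol x y), ← tameSymbol_swap,
        tameSymbol_of_add_eq_one_of_order_neg h' hy, inv_one]
    · simp [tameSymbol_eq, hx, hy]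
    · rw [← inv_inv (tameSymbol x y), ← tameSymbol_swap,
        tameSymbol_of_add_eq_one_of_order_pos h' hy, inv_one]
  · exact tameSymbol_of_add_eq_one_of_order_pos h hx

end LaurentSeries

/-- The element `t(x,y) = (-1)^(v(x)v(y)) x^(v(y)) y^(-v(x))` has order `0` (hence lies
in `k[[T]]ˣ`), and sending `(x, y)` to the constant coefficient of `t(x,y)` gives a
symbol on `k((T))` with values in `kˣ`. -/
theorem laurentSeries_tame_symbol (k : Type*) [Field k] :
    (∀ x y : (LaurentSeries k)ˣ,
      ((lsTame k x y : (LaurentSeries k)ˣ) : LaurentSeries k).order = 0) ∧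
    ∃ s : (LaurentSeries k)ˣ → (LaurentSeries k)ˣ → kˣ,
      (∀ x y : (LaurentSeries k)ˣ,
        (s x y : k) = ((lsTame k x y : (LaurentSeries k)ˣ) : LaurentSeries k).coeff 0) ∧
      IsMulSymbol s := by
  open LaurentSeries in
  exact ⟨order_lsTame, tameSymbol, coe_tameSymbol, tameSymbol_mul_left, tameSymbol_mul_right,
    fun _ _ => tameSymbol_of_add_eq_one⟩
end

section
/- Let F be a field, Ω¹_F = Ω_{F/ℤ} its module of Kähler differentials over ℤ with universal derivation d : F → Ω¹_F, and Ω²_F = ⋀²_F Ω¹_F the second exterior power over F. Then the map dlog₂ : Fˣ × Fˣ → Ω²_F defined by dlog₂(x, y) = (x⁻¹ · d x) ∧ (y⁻¹ · d y) is an Ω²_F-valued symbol on F: it is ℤ-bilinear and dlog₂(x, y) = 0 whenever x + y = 1. -/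
/-- The element `dlog₂(x, y) = (x⁻¹ dx) ∧ (y⁻¹ dy)` of `Ω²_F = ⋀²_F Ω_{F/ℤ}`. -/
noncomputable def dlog2 (F : Type*) [Field F] (x y : Fˣ) :
    ⋀[F]^2 (KaehlerDifferential ℤ F) :=
  ⟨ExteriorAlgebra.ιMulti F 2
      ![(x : F)⁻¹ • KaehlerDifferential.D ℤ F (x : F),
        (y : F)⁻¹ • KaehlerDifferential.D ℤ F (y : F)],
    ExteriorAlgebra.ιMulti_range F 2 (Set.mem_range_self _)⟩

/-!
Writing `dlog x = x⁻¹ dx`, the Leibniz rule makes `dlog` a homomorphism `Fˣ → Ω¹_F`, so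
`dlog₂(x, y) = dlog x ∧ dlog y` is biadditive. If `x + y = 1` then `dx = -dy`, so `dlog x` and
`dlog y` are `F`-proportional and their wedge product vanishes.
-/

open KaehlerDifferential

section LogDifferential

variable (R : Type*) {F : Type*} [CommRing R] [Field F] [Algebra R F]

noncomputable def dlog (x : Fˣ) : Ω[F⁄R] :=
  (x : F)⁻¹ • D R F x

theorem smul_dlog (x : Fˣ) : (x : F) • dlog R x = D R F x := by
  rw [dlog, smul_smul, mul_inv_cancel₀ x.ne_zero, one_smul]

theorem dlog_mul (x y : Fˣ) : dlog R (x * y) = dlog R x + dlog R y := by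
  have hx : (x : F) ≠ 0 := x.ne_zero
  have hy : (y : F) ≠ 0 := y.ne_zero
  simp only [dlog, Units.val_mul, Derivation.leibniz, smul_add, smul_smul]
  rw [show ((x : F) * y)⁻¹ * x = (y : F)⁻¹ by field_simp,
    show ((x : F) * y)⁻¹ * y = (x : F)⁻¹ by field_simp, add_comm]

theorem dlog_eq_smul_dlog_of_add_eq_one {x y : Fˣ} (h : (x : F) + y = 1) :
    dlog R x = (-(y / x : F)) • dlog R y := by
  have hD : D R F x = -D R F y := by
    rw [eq_neg_iff_add_eq_zero, ← map_add, h, Derivation.map_one_eq_zero]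
  rw [dlog, hD, ← smul_dlog R y, smul_neg, smul_smul, neg_smul, inv_mul_eq_div]

end LogDifferential

namespace ExteriorAlgebra

variable {R M : Type*} [CommRing R] [AddCommGroup M] [Module R M]

theorem ιMulti_two_apply (a b : M) : ιMulti R 2 ![a, b] = ι R a * ι R b := by
  simp [ιMulti_apply]

theorem ι_smul_mul_ι_self (c : R) (m : M) : ι R (c • m) * ι R m = 0 := by
  rw [map_smul, smul_mul_assoc, ι_sq_zero, smul_zero]

end ExteriorAlgebra

open ExteriorAlgebra in
theorem coe_dlog2 (F : Type*) [Field F] (x y : Fˣ) :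
    (dlog2 F x y : ExteriorAlgebra F (Ω[F⁄ℤ])) = ι F (dlog ℤ x) * ι F (dlog ℤ y) :=
  ιMulti_two_apply _ _

/-- The map `dlog₂(x, y) = (x⁻¹ dx) ∧ (y⁻¹ dy)` is an `Ω²_F`-valued symbol on `F`. -/
theorem dlog2_isAddSymbol (F : Type*) [Field F] :
    IsAddSymbol (fun x y : Fˣ => dlog2 F x y) := by
  refine ⟨fun x x' y => ?_, fun x y y' => ?_, fun x y h => ?_⟩ <;>
    apply Subtype.ext <;> push_cast [coe_dlog2]
  · rw [dlog_mul, map_add, add_mul]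
  · rw [dlog_mul, map_add, mul_add]
  · rw [dlog_eq_smul_dlog_of_add_eq_one ℤ h, ExteriorAlgebra.ι_smul_mul_ι_self]
end
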